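/- Let u : D × R → ℝ be a utility function with sensitivity Δu, i.e. |u(D₁,r) − u(D₂,r)| ≤ Δu for all neighboring D₁,D₂ and all r ∈ R, where R is a finite nonempty set. Define the exponential mechanism probability Pr_D[r] = exp(ε·u(D,r)) / Σ_{r'∈R} exp(ε·u(D,r')). Then for any neighboring D₁,D₂ and any r ∈ R, Pr_{D₁}[r] ≤ exp(2ε·Δu) · Pr_{D₂}[r]. -/
import Mathlib


open Finset

/-- Exponential mechanism privacy (upper bound): with sensitivity Δu,
    Pr_{D₁}[r] ≤ exp(2ε·Δu) · Pr_{D₂}[r] for neighboring D₁, D₂. -/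
theorem exp_mech_privacy {D R : Type*} [Fintype R] [Nonempty R]
    (N : D → D → Prop) (u : D → R → ℝ) (ε Δu : ℝ)
    (hε : 0 ≤ ε) (hΔ : 0 ≤ Δu)
    (hsym : ∀ D₁ D₂, N D₁ D₂ → N D₂ D₁)
    (hsens : ∀ D₁ D₂, N D₁ D₂ → ∀ r : R, |u D₁ r - u D₂ r| ≤ Δu)
    (D₁ D₂ : D) (hN : N D₁ D₂) (r : R) :
    Real.exp (ε * u D₁ r) / ∑ r' : R, Real.exp (ε * u D₁ r')
      ≤ Real.exp (2 * ε * Δu) *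
        (Real.exp (ε * u D₂ r) / ∑ r' : R, Real.exp (ε * u D₂ r')) := by
  set S₁ := ∑ r' : R, Real.exp (ε * u D₁ r') with hS₁
  set S₂ := ∑ r' : R, Real.exp (ε * u D₂ r') with hS₂
  have hS₁pos : 0 < S₁ := Finset.sum_pos (fun i _ => Real.exp_pos _) univ_nonempty
  have hS₂pos : 0 < S₂ := Finset.sum_pos (fun i _ => Real.exp_pos _) univ_nonempty
  -- pointwise bound: exp(ε u₁ r) ≤ exp(εΔu) exp(ε u₂ r)
  have hpt : ∀ r' : R, Real.exp (ε * u D₁ r') ≤ Real.exp (ε * Δu) * Real.exp (ε * u D₂ r') := by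
    intro r'
    rw [← Real.exp_add]
    apply Real.exp_le_exp.mpr
    have h := (abs_le.mp (hsens D₁ D₂ hN r')).2
    nlinarith [mul_le_mul_of_nonneg_left h hε]
  -- S₂ ≤ exp(εΔu) S₁
  have hpt2 : ∀ r' : R, Real.exp (ε * u D₂ r') ≤ Real.exp (ε * Δu) * Real.exp (ε * u D₁ r') := by
    intro r'
    rw [← Real.exp_add]
    apply Real.exp_le_exp.mpr
    have h := (abs_le.mp (hsens D₁ D₂ hN r')).1
    nlinarith [mul_le_mul_of_nonneg_left h hε]
  have hS : S₂ ≤ Real.exp (ε * Δu) * S₁ := by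
    rw [hS₂, hS₁, Finset.mul_sum]
    exact Finset.sum_le_sum fun i _ => hpt2 i
  have hE : (0:ℝ) < Real.exp (ε * Δu) := Real.exp_pos _
  rw [← mul_div_assoc, div_le_div_iff₀ hS₁pos hS₂pos]
  calc Real.exp (ε * u D₁ r) * S₂
      ≤ (Real.exp (ε * Δu) * Real.exp (ε * u D₂ r)) * (Real.exp (ε * Δu) * S₁) := by
        apply mul_le_mul (hpt r) hS (le_of_lt hS₂pos) (by positivity)
    _ = Real.exp (2 * ε * Δu) * Real.exp (ε * u D₂ r) * S₁ := by
        rw [show (2:ℝ) * ε * Δu = ε * Δu + ε * Δu by ring, Real.exp_add]; ring
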